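/- arXiv:1007.0738 — 2 statements merged into one kernel-verified Lean document; each statement's English description precedes it below -/
import Mathlib

section
/- Let p ∈ (1,∞) and η ∈ (0, 2π). Suppose there exist u : ℝ² → ℝ and f : [−η/2, η/2] → ℝ such that u is continuous on the closure of W_η, three times continuously differentiable on W_η, u(r cos θ, r sin θ) = r² f(θ) for all r > 0 and θ ∈ [−η/2, η/2], u = 0 on ∂W_η, u > 0 on W_η, ∇u ≠ 0 on W_η, and (1/p)·Δu(x) + (1 − 2/p)·|∇u(x)|^{−2}·⟨∇u(x), (D²u(x))·∇u(x)⟩ = −1 for every x ∈ W_η. Then necessarily η < π·(1 − (1/2)·√(2(p−1)/p)). -/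
open Set Real

/-- The planar wedge of angle `η`. -/
def wedge (η : ℝ) : Set (EuclideanSpace ℝ (Fin 2)) :=
  {x | ∃ r θ : ℝ, 0 < r ∧ -η/2 < θ ∧ θ < η/2 ∧
    x 0 = r * Real.cos θ ∧ x 1 = r * Real.sin θ}

/-- The point with polar coordinates `(r, θ)`. -/
noncomputable def ptOf (r θ : ℝ) : EuclideanSpace ℝ (Fin 2) :=
  (WithLp.equiv 2 (Fin 2 → ℝ)).symm ![r * Real.cos θ, r * Real.sin θ]

/-- The game `p`-Laplacian:
`Δ_p u (x) = (1/p)·Δu(x) + (1 − 2/p)·|∇u(x)|⁻²·⟨∇u(x), D²u(x)·∇u(x)⟩`. -/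
noncomputable def gameLap (p : ℝ) (u : EuclideanSpace ℝ (Fin 2) → ℝ)
    (x : EuclideanSpace ℝ (Fin 2)) : ℝ :=
  (1/p) * (∑ i : Fin 2,
      fderiv ℝ (fun z => gradient u z) x (EuclideanSpace.single i 1) i)
  + (1 - 2/p) * (‖gradient u x‖^2)⁻¹ *
      (inner ℝ (gradient u x) (fderiv ℝ (fun z => gradient u z) x (gradient u x)) : ℝ)

/-!
Writing `u = r² F(θ)`, the equation `Δ_p u = -1` at `ptOf 1 θ` is a second-order ODE for `F`
on `(-η/2, η/2)`. With `v = F'/F`, `a = √(2p/(p-1))` and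
`H(w) = arctan (w/2) - a⁻¹ arctan (w/a)`, the ODE makes the phase `θ + H(v θ)` have derivative
`-p / (F (2p + (p-1) v²)) < 0`. Since `|H| < π/2 · (1 - a⁻¹)`, a strictly decreasing function that
stays this close to the identity can only live on an interval of length `< π (1 - a⁻¹)`.
-/

open Filter Topology

noncomputable section

local notation "E²" => EuclideanSpace ℝ (Fin 2)

def radialVec (θ : ℝ) : E² :=
  cos θ • EuclideanSpace.single 0 1 + sin θ • EuclideanSpace.single 1 1

def angularVec (θ : ℝ) : E² :=
  (-sin θ) • EuclideanSpace.single 0 1 + cos θ • EuclideanSpace.single 1 1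

@[simp] lemma radialVec_apply_zero (θ : ℝ) : radialVec θ 0 = cos θ := by simp [radialVec]
@[simp] lemma radialVec_apply_one (θ : ℝ) : radialVec θ 1 = sin θ := by simp [radialVec]
@[simp] lemma angularVec_apply_zero (θ : ℝ) : angularVec θ 0 = -sin θ := by simp [angularVec]
@[simp] lemma angularVec_apply_one (θ : ℝ) : angularVec θ 1 = cos θ := by simp [angularVec]
@[simp] lemma ptOf_apply_zero (r θ : ℝ) : ptOf r θ 0 = r * cos θ := by simp [ptOf]
@[simp] lemma ptOf_apply_one (r θ : ℝ) : ptOf r θ 1 = r * sin θ := by simp [ptOf]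

lemma ptOf_eq_smul_radialVec (r θ : ℝ) : ptOf r θ = r • radialVec θ := by
  ext i; fin_cases i <;> simp

lemma real_inner_eq_coords (x y : E²) : inner ℝ x y = x 0 * y 0 + x 1 * y 1 := by
  simp [PiLp.inner_apply, Fin.sum_univ_two, mul_comm]

lemma hasDerivAt_radialVec (θ : ℝ) : HasDerivAt radialVec (angularVec θ) θ :=
  ((hasDerivAt_cos θ).smul_const _).add ((hasDerivAt_sin θ).smul_const _)

lemma hasDerivAt_angularVec (θ : ℝ) : HasDerivAt angularVec (-radialVec θ) θ := by
  refine (((hasDerivAt_sin θ).neg.smul_const _).add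
    ((hasDerivAt_cos θ).smul_const _)).congr_deriv ?_
  simp only [radialVec]
  module

lemma contDiff_radialVec {n : WithTop ℕ∞} : ContDiff ℝ n radialVec :=
  (contDiff_cos.smul contDiff_const).add (contDiff_sin.smul contDiff_const)

lemma eq_inner_radialVec_smul_add (w : E²) (θ : ℝ) :
    w = inner ℝ w (radialVec θ) • radialVec θ + inner ℝ w (angularVec θ) • angularVec θ := by
  ext i; fin_cases i <;>
    simp only [Fin.zero_eta, Fin.mk_one, real_inner_eq_coords, PiLp.add_apply, PiLp.smul_apply,
      smul_eq_mul, radialVec_apply_zero, radialVec_apply_one, angularVec_apply_zero,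
      angularVec_apply_one] <;>
    linear_combination (-(w _)) * sin_sq_add_cos_sq θ

lemma single_zero_eq (θ : ℝ) :
    EuclideanSpace.single (0 : Fin 2) (1 : ℝ) = cos θ • radialVec θ - sin θ • angularVec θ := by
  ext i; fin_cases i <;> simp <;>
    nlinarith [sin_sq_add_cos_sq θ]

lemma single_one_eq (θ : ℝ) :
    EuclideanSpace.single (1 : Fin 2) (1 : ℝ) = sin θ • radialVec θ + cos θ • angularVec θ := by
  ext i; fin_cases i <;> simp <;>
    nlinarith [sin_sq_add_cos_sq θ]

lemma ptOf_mem_wedge {η r θ : ℝ} (hr : 0 < r) (hθ : θ ∈ Ioo (-η/2) (η/2)) :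
    ptOf r θ ∈ wedge η :=
  ⟨r, θ, hr, hθ.1, hθ.2, by simp, by simp⟩

lemma isOpen_wedge {η : ℝ} (hη : η ≤ 2 * π) : IsOpen (wedge η) := by
  have hsub : Ioi 0 ×ˢ Ioo (-η/2) (η/2) ⊆ polarCoord.target := by
    refine prod_mono subset_rfl (Ioo_subset_Ioo ?_ ?_) <;> linarith
  have hopen := polarCoord.isOpen_image_symm_of_subset_target
    (isOpen_Ioi.prod isOpen_Ioo) hsub
  convert hopen.preimage (f := fun x : E² => (x 0, x 1)) (by fun_prop) using 1
  ext x
  simp only [wedge, mem_ofPred_eq, mem_preimage, mem_image, mem_prod, mem_Ioi, mem_Ioo,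
    polarCoord_symm_apply, Prod.exists, Prod.mk.injEq]
  constructor
  · rintro ⟨r, θ, hr, h1, h2, h0, h1'⟩
    exact ⟨r, θ, ⟨hr, h1, h2⟩, h0.symm, h1'.symm⟩
  · rintro ⟨r, θ, ⟨hr, h1, h2⟩, h0, h1'⟩
    exact ⟨r, θ, hr, h1, h2, h0.symm, h1'.symm⟩

section PolarDerivatives

variable {Y : Type*} [NormedAddCommGroup Y] [NormedSpace ℝ Y] {g : E² → Y} {r θ : ℝ}

lemma hasDerivAt_comp_ptOf_radius (hg : DifferentiableAt ℝ g (ptOf r θ)) :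
    HasDerivAt (fun t => g (ptOf t θ)) (fderiv ℝ g (ptOf r θ) (radialVec θ)) r := by
  simp only [ptOf_eq_smul_radialVec] at hg ⊢
  have hline := (hasDerivAt_id r).smul_const (radialVec θ)
  rw [one_smul] at hline
  exact hg.hasFDerivAt.comp_hasDerivAt r hline

lemma hasDerivAt_comp_ptOf_angle (hg : DifferentiableAt ℝ g (ptOf r θ)) :
    HasDerivAt (fun s => g (ptOf r s)) (r • fderiv ℝ g (ptOf r θ) (angularVec θ)) θ := by
  simp only [ptOf_eq_smul_radialVec] at hg ⊢
  rw [← map_smul]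
  exact hg.hasFDerivAt.comp_hasDerivAt θ ((hasDerivAt_radialVec θ).const_smul r)

end PolarDerivatives

lemma differentiableAt_gradient {H : Type*} [NormedAddCommGroup H] [InnerProductSpace ℝ H]
    [CompleteSpace H] {u : H → ℝ} {x : H} (hu : ContDiffAt ℝ 2 u x) :
    DifferentiableAt ℝ (gradient u) x :=
  (InnerProductSpace.toDual ℝ H).symm.differentiable.differentiableAt.comp x
    ((hu.fderiv_right (m := 1) (by norm_num)).differentiableAt one_ne_zero)

lemma hasDerivAt_deriv_of_contDiffAt_two {E : Type*} [NormedAddCommGroup E] [NormedSpace ℝ E]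
    {f : ℝ → E} {x : ℝ} (hf : ContDiffAt ℝ 2 f x) :
    HasDerivAt (deriv f) (deriv (deriv f) x) x :=
  ((hf.derivWithin (m := 1) (by norm_num)).differentiableAt one_ne_zero).hasDerivAt

def HasDegreeTwoProfile (η : ℝ) (u : E² → ℝ) (F : ℝ → ℝ) : Prop :=
  ∀ r θ, 0 < r → θ ∈ Ioo (-η/2) (η/2) → u (ptOf r θ) = r ^ 2 * F θ

section HomogeneousOfDegreeTwo

variable {η : ℝ} {u : E² → ℝ} {F : ℝ → ℝ} {θ : ℝ}

lemma contDiffAt_profile {n : WithTop ℕ∞} (hη : η ≤ 2 * π) (hu : ContDiffOn ℝ n u (wedge η))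
    (hval : HasDegreeTwoProfile η u F) (hθ : θ ∈ Ioo (-η/2) (η/2)) :
    ContDiffAt ℝ n F θ := by
  have hcomp : ContDiffAt ℝ n (fun s => u (ptOf 1 s)) θ := by
    have hmem := (isOpen_wedge hη).mem_nhds (ptOf_mem_wedge one_pos hθ)
    simp only [ptOf_eq_smul_radialVec, one_smul] at hmem ⊢
    exact (hu.contDiffAt hmem).comp θ contDiff_radialVec.contDiffAt
  refine hcomp.congr_of_eventuallyEq ?_
  filter_upwards [isOpen_Ioo.mem_nhds hθ] with s hs
  simpa using (hval 1 s one_pos hs).symm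

lemma gradient_ptOf (hη : η ≤ 2 * π) (hu : ContDiffOn ℝ 1 u (wedge η))
    (hval : HasDegreeTwoProfile η u F) {r : ℝ} (hr : 0 < r) (hθ : θ ∈ Ioo (-η/2) (η/2)) :
    gradient u (ptOf r θ) = (2 * r * F θ) • radialVec θ + (r * deriv F θ) • angularVec θ := by
  have hx := (isOpen_wedge hη).mem_nhds (ptOf_mem_wedge hr hθ)
  have hu' : DifferentiableAt ℝ u (ptOf r θ) := (hu.contDiffAt hx).differentiableAt one_ne_zero
  have hF : DifferentiableAt ℝ F θ :=
    (contDiffAt_profile hη hu hval hθ).differentiableAt one_ne_zero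
  have hradial : fderiv ℝ u (ptOf r θ) (radialVec θ) = 2 * r * F θ := by
    refine (hasDerivAt_comp_ptOf_radius hu').unique ?_
    refine (((hasDerivAt_pow 2 r).mul_const (F θ)).congr_of_eventuallyEq ?_).congr_deriv
      (by ring)
    filter_upwards [Ioi_mem_nhds hr] with t ht using hval t θ ht hθ
  have hangular : r • fderiv ℝ u (ptOf r θ) (angularVec θ) = r • (r * deriv F θ) := by
    refine (hasDerivAt_comp_ptOf_angle hu').unique ?_
    refine ((hF.hasDerivAt.const_mul (r ^ 2)).congr_of_eventuallyEq ?_).congr_deriv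
      (by simp only [smul_eq_mul]; ring)
    filter_upwards [isOpen_Ioo.mem_nhds hθ] with s hs using hval r s hr hs
  rw [eq_inner_radialVec_smul_add (gradient u (ptOf r θ)) θ, inner_gradient_left,
    inner_gradient_left, hradial, smul_right_injective ℝ hr.ne' hangular]

lemma fderiv_gradient_ptOf_one (hη : η ≤ 2 * π) (hu : ContDiffOn ℝ 2 u (wedge η))
    (hval : HasDegreeTwoProfile η u F) (hθ : θ ∈ Ioo (-η/2) (η/2)) :
    fderiv ℝ (gradient u) (ptOf 1 θ) (radialVec θ)
        = (2 * F θ) • radialVec θ + deriv F θ • angularVec θ ∧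
      fderiv ℝ (gradient u) (ptOf 1 θ) (angularVec θ)
        = deriv F θ • radialVec θ + (2 * F θ + deriv (deriv F) θ) • angularVec θ := by
  have hx := (isOpen_wedge hη).mem_nhds (ptOf_mem_wedge one_pos hθ)
  have hG : DifferentiableAt ℝ (gradient u) (ptOf 1 θ) :=
    differentiableAt_gradient (hu.contDiffAt hx)
  have hu1 : ContDiffOn ℝ 1 u (wedge η) := hu.of_le (by norm_num)
  have hF2 := contDiffAt_profile hη hu hval hθ
  have hF : HasDerivAt F (deriv F θ) θ := (hF2.differentiableAt two_ne_zero).hasDerivAt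
  have hF' := hasDerivAt_deriv_of_contDiffAt_two hF2
  constructor
  · refine (hasDerivAt_comp_ptOf_radius hG).unique ?_
    have hline := (hasDerivAt_id (1 : ℝ)).smul_const
      ((2 * F θ) • radialVec θ + deriv F θ • angularVec θ)
    rw [one_smul] at hline
    refine hline.congr_of_eventuallyEq ?_
    filter_upwards [Ioi_mem_nhds one_pos] with t ht
    rw [gradient_ptOf hη hu1 hval ht hθ]
    simp only [id]
    module
  · have hcurve := ((hF.const_mul 2).smul (hasDerivAt_radialVec θ)).add
      (hF'.smul (hasDerivAt_angularVec θ))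
    have h := (hasDerivAt_comp_ptOf_angle hG).unique (hcurve.congr_of_eventuallyEq ?_)
    · rw [one_smul] at h
      rw [h]
      module
    filter_upwards [isOpen_Ioo.mem_nhds hθ] with s hs
    rw [gradient_ptOf hη hu1 hval one_pos hs, mul_one, one_mul]
    rfl

lemma gameLap_ptOf_one (p : ℝ) (hη : η ≤ 2 * π) (hu : ContDiffOn ℝ 2 u (wedge η))
    (hval : HasDegreeTwoProfile η u F) (hθ : θ ∈ Ioo (-η/2) (η/2)) :
    gameLap p u (ptOf 1 θ) = 1 / p * (4 * F θ + deriv (deriv F) θ)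
      + (1 - 2 / p) * (4 * F θ ^ 2 + deriv F θ ^ 2)⁻¹
        * (8 * F θ ^ 3 + 6 * F θ * deriv F θ ^ 2 + deriv F θ ^ 2 * deriv (deriv F) θ) := by
  obtain ⟨hradial, hangular⟩ := fderiv_gradient_ptOf_one hη hu hval hθ
  have hgrad := gradient_ptOf hη (hu.of_le one_le_two) hval one_pos hθ
  have htrace : ∑ i : Fin 2, fderiv ℝ (gradient u) (ptOf 1 θ) (EuclideanSpace.single i 1) i
      = 4 * F θ + deriv (deriv F) θ := by
    rw [Fin.sum_univ_two, single_zero_eq θ, single_one_eq θ]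
    simp only [map_sub, map_add, map_smul, hradial, hangular]
    simp only [PiLp.add_apply, PiLp.sub_apply, PiLp.smul_apply, smul_eq_mul, smul_add,
      radialVec_apply_zero, radialVec_apply_one, angularVec_apply_zero, angularVec_apply_one]
    linear_combination (4 * F θ + deriv (deriv F) θ) * sin_sq_add_cos_sq θ
  have hnorm : ‖gradient u (ptOf 1 θ)‖ ^ 2 = 4 * F θ ^ 2 + deriv F θ ^ 2 := by
    rw [← real_inner_self_eq_norm_sq, hgrad, real_inner_eq_coords]
    simp only [PiLp.add_apply, PiLp.smul_apply, smul_eq_mul,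
      radialVec_apply_zero, radialVec_apply_one, angularVec_apply_zero, angularVec_apply_one]
    linear_combination (4 * F θ ^ 2 + deriv F θ ^ 2) * sin_sq_add_cos_sq θ
  have hquadratic : inner ℝ (gradient u (ptOf 1 θ))
      (fderiv ℝ (gradient u) (ptOf 1 θ) (gradient u (ptOf 1 θ)))
      = 8 * F θ ^ 3 + 6 * F θ * deriv F θ ^ 2 + deriv F θ ^ 2 * deriv (deriv F) θ := by
    rw [hgrad, map_add, map_smul, map_smul, hradial, hangular, real_inner_eq_coords]
    simp only [PiLp.add_apply, PiLp.smul_apply, smul_eq_mul, smul_add,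
      radialVec_apply_zero, radialVec_apply_one, angularVec_apply_zero, angularVec_apply_one]
    linear_combination (8 * F θ ^ 3 + 6 * F θ * deriv F θ ^ 2
      + deriv F θ ^ 2 * deriv (deriv F) θ) * sin_sq_add_cos_sq θ
  rw [gameLap, htrace, hnorm, hquadratic]

end HomogeneousOfDegreeTwo

lemma sub_lt_two_mul_of_strictAntiOn_of_abs_sub_lt {φ : ℝ → ℝ} {a b M : ℝ} (hab : a < b)
    (hφ : StrictAntiOn φ (Ioo a b)) (hM : ∀ θ ∈ Ioo a b, |φ θ - θ| < M) :
    b - a < 2 * M := by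
  have hm₁ : (2 * a + b) / 3 ∈ Ioo a b := ⟨by linarith, by linarith⟩
  have hm₂ : (a + 2 * b) / 3 ∈ Ioo a b := ⟨by linarith, by linarith⟩
  have hleft : φ ((2 * a + b) / 3) ≤ a + M := by
    refine le_of_forall_gt_imp_ge_of_dense fun c hc => ?_
    set t := min ((2 * a + b) / 3) (c - M)
    have ht : t ∈ Ioo a b := ⟨lt_min hm₁.1 (by linarith), (min_le_left _ _).trans_lt hm₁.2⟩
    have hφt := (abs_lt.1 (hM t ht)).2
    linarith [hφ.antitoneOn ht hm₁ (min_le_left _ _), min_le_right ((2 * a + b) / 3) (c - M)]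
  have hright : b - M ≤ φ ((a + 2 * b) / 3) := by
    refine le_of_forall_lt_imp_le_of_dense fun c hc => ?_
    set t := max ((a + 2 * b) / 3) (c + M)
    have ht : t ∈ Ioo a b := ⟨hm₂.1.trans_le (le_max_left _ _), max_lt hm₂.2 (by linarith)⟩
    have hφt := (abs_lt.1 (hM t ht)).1
    linarith [hφ.antitoneOn hm₂ ht (le_max_left _ _), le_max_right ((a + 2 * b) / 3) (c + M)]
  linarith [hφ hm₁ hm₂ (by linarith)]

def angleShift (a w : ℝ) : ℝ := arctan (w / 2) - a⁻¹ * arctan (w / a)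

lemma hasDerivAt_angleShift {a : ℝ} (ha : a ≠ 0) (w : ℝ) :
    HasDerivAt (angleShift a) (2 / (4 + w ^ 2) - 1 / (a ^ 2 + w ^ 2)) w := by
  have h₁ := (hasDerivAt_arctan (w / 2)).comp w ((hasDerivAt_id w).div_const 2)
  have h₂ := ((hasDerivAt_arctan (w / a)).comp w ((hasDerivAt_id w).div_const a)).const_mul a⁻¹
  refine (h₁.sub h₂).congr_deriv ?_
  field_simp
  ring

lemma strictMono_angleShift {a : ℝ} (ha : 2 < a ^ 2) : StrictMono (angleShift a) := by
  have ha₀ : a ≠ 0 := by rintro rfl; norm_num at ha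
  refine strictMono_of_deriv_pos fun w => ?_
  rw [(hasDerivAt_angleShift ha₀ w).deriv, sub_pos,
    div_lt_div_iff₀ (by positivity) (by positivity)]
  nlinarith [sq_nonneg w]

lemma abs_angleShift_lt {a : ℝ} (ha : 0 < a) (ha₂ : 2 < a ^ 2) (w : ℝ) :
    |angleShift a w| < π / 2 - a⁻¹ * (π / 2) := by
  have hmono := strictMono_angleShift ha₂
  have harctan_top := tendsto_arctan_atTop.mono_right nhdsWithin_le_nhds
  have harctan_bot := tendsto_arctan_atBot.mono_right nhdsWithin_le_nhds
  have htop : Tendsto (angleShift a) atTop (𝓝 (π / 2 - a⁻¹ * (π / 2))) :=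
    (harctan_top.comp (tendsto_id.atTop_div_const two_pos)).sub
      ((harctan_top.comp (tendsto_id.atTop_div_const ha)).const_mul a⁻¹)
  have hbot : Tendsto (angleShift a) atBot (𝓝 (-(π / 2) - a⁻¹ * -(π / 2))) :=
    (harctan_bot.comp (tendsto_id.atBot_div_const two_pos)).sub
      ((harctan_bot.comp (tendsto_id.atBot_div_const ha)).const_mul a⁻¹)
  rw [abs_lt]
  constructor
  · linarith [hmono.monotone.le_of_tendsto hbot (w - 1), hmono (sub_one_lt w)]
  · linarith [hmono.monotone.ge_of_tendsto htop (w + 1), hmono (lt_add_one w)]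

lemma phase_deriv_neg_of_profile_ode {p a c c' c'' : ℝ} (hp : 1 < p)
    (ha : a ^ 2 = 2 * p / (p - 1)) (hc : 0 < c)
    (hode : 1 / p * (4 * c + c'') + (1 - 2 / p) * (4 * c ^ 2 + c' ^ 2)⁻¹
      * (8 * c ^ 3 + 6 * c * c' ^ 2 + c' ^ 2 * c'') = -1) :
    1 + (2 / (4 + (c' / c) ^ 2) - 1 / (a ^ 2 + (c' / c) ^ 2)) * ((c'' * c - c' ^ 2) / c ^ 2)
      < 0 := by
  have hp₀ : 0 < p := by linarith
  have hp₁ : 0 < p - 1 := by linarith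
  have ha₀ : 0 < a ^ 2 := ha ▸ div_pos (by linarith) hp₁
  have ha' : a ^ 2 * (p - 1) = 2 * p := by rw [ha]; field_simp
  have hc'' : c'' * (4 * c ^ 2 + (p - 1) * c' ^ 2)
      = -(p * (4 * c ^ 2 + c' ^ 2)) - 8 * p * c ^ 3 - (6 * p - 8) * c * c' ^ 2 := by
    field_simp at hode
    linear_combination hode
  have hnum : (p - 1) * ((4 * c ^ 2 + c' ^ 2) * (a ^ 2 * c ^ 2 + c' ^ 2)
      + (2 * (a ^ 2 * c ^ 2 + c' ^ 2) - (4 * c ^ 2 + c' ^ 2)) * (c'' * c - c' ^ 2))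
      = -(p * c * (4 * c ^ 2 + c' ^ 2)) := by
    linear_combination c * hc'' + ((4 * c ^ 2 + c' ^ 2) * c ^ 2 + 2 * c ^ 3 * c''
      - 2 * c ^ 2 * c' ^ 2) * ha'
  have hS : 0 < 4 * c ^ 2 + c' ^ 2 := by positivity
  have hT : 0 < a ^ 2 * c ^ 2 + c' ^ 2 := by positivity
  have hrewrite : 1 + (2 / (4 + (c' / c) ^ 2) - 1 / (a ^ 2 + (c' / c) ^ 2))
      * ((c'' * c - c' ^ 2) / c ^ 2)
      = ((4 * c ^ 2 + c' ^ 2) * (a ^ 2 * c ^ 2 + c' ^ 2)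
          + (2 * (a ^ 2 * c ^ 2 + c' ^ 2) - (4 * c ^ 2 + c' ^ 2)) * (c'' * c - c' ^ 2))
        / ((4 * c ^ 2 + c' ^ 2) * (a ^ 2 * c ^ 2 + c' ^ 2)) := by
    field_simp
  rw [hrewrite]
  refine div_neg_of_neg_of_pos ?_ (mul_pos hS hT)
  nlinarith [mul_pos (mul_pos hp₀ hc) hS]

lemma strictAntiOn_phase {η p a : ℝ} {u : E² → ℝ} {F : ℝ → ℝ} (hp : 1 < p)
    (ha : a ^ 2 = 2 * p / (p - 1)) (hη : η ≤ 2 * π) (hu : ContDiffOn ℝ 2 u (wedge η))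
    (hval : HasDegreeTwoProfile η u F) (hpos : ∀ θ ∈ Ioo (-η/2) (η/2), 0 < F θ)
    (hpde : ∀ θ ∈ Ioo (-η/2) (η/2), gameLap p u (ptOf 1 θ) = -1) :
    StrictAntiOn (fun θ => θ + angleShift a (deriv F θ / F θ)) (Ioo (-η/2) (η/2)) := by
  have ha₀ : a ≠ 0 := by
    rintro rfl
    have : (0 : ℝ) < 2 * p / (p - 1) := div_pos (by linarith) (by linarith)
    rw [← ha] at this
    norm_num at this
  have hderiv : ∀ θ ∈ Ioo (-η/2) (η/2),
      HasDerivAt (fun θ => θ + angleShift a (deriv F θ / F θ))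
        (1 + (2 / (4 + (deriv F θ / F θ) ^ 2) - 1 / (a ^ 2 + (deriv F θ / F θ) ^ 2))
          * ((deriv (deriv F) θ * F θ - deriv F θ ^ 2) / F θ ^ 2)) θ := by
    intro θ hθ
    have hF2 := contDiffAt_profile hη hu hval hθ
    have hv := (hasDerivAt_deriv_of_contDiffAt_two hF2).div
      (hF2.differentiableAt two_ne_zero).hasDerivAt (hpos θ hθ).ne'
    exact (hasDerivAt_id θ).add ((hasDerivAt_angleShift ha₀ _).comp θ
      (hv.congr_deriv (by ring)))
  rw [← interior_Ioo] at hderiv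
  refine strictAntiOn_of_hasDerivWithinAt_neg (convex_Ioo _ _)
    (fun θ hθ => (hderiv θ (by rwa [interior_Ioo])).continuousAt.continuousWithinAt)
    (fun θ hθ => (hderiv θ hθ).hasDerivWithinAt) (fun θ hθ => ?_)
  rw [interior_Ioo] at hθ
  refine phase_deriv_neg_of_profile_ode hp ha (hpos θ hθ) ?_
  rw [← gameLap_ptOf_one p hη hu hval hθ]
  exact hpde θ hθ

end

theorem necessity_of_angle_condition_general
    (p η : ℝ) (hp : 1 < p) (hη : η ∈ Set.Ioo 0 (2*Real.pi))
    (u : EuclideanSpace ℝ (Fin 2) → ℝ) (f : ℝ → ℝ)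
    (husmooth : ContDiffOn ℝ 3 u (wedge η))
    (huf : ∀ r θ : ℝ, 0 < r → θ ∈ Set.Icc (-η/2) (η/2) → u (ptOf r θ) = r^2 * f θ)
    (hupos : ∀ x ∈ wedge η, 0 < u x)
    (hupde : ∀ x ∈ wedge η, gameLap p u x = -1) :
    η < Real.pi * (1 - (1/2) * Real.sqrt (2*(p-1)/p)) := by
  obtain ⟨hη₀, hη₂⟩ := hη
  have hval : HasDegreeTwoProfile η u f := fun r θ hr hθ =>
    huf r θ hr (Ioo_subset_Icc_self hθ)
  have hfpos : ∀ θ ∈ Ioo (-η/2) (η/2), 0 < f θ := fun θ hθ => by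
    simpa [hval 1 θ one_pos hθ] using hupos _ (ptOf_mem_wedge one_pos hθ)
  set a := √(2 * p / (p - 1))
  have hA : 0 < 2 * p / (p - 1) := div_pos (by linarith) (by linarith)
  have ha : a ^ 2 = 2 * p / (p - 1) := sq_sqrt hA.le
  have ha₂ : 2 < a ^ 2 := by rw [ha, lt_div_iff₀ (by linarith)]; linarith
  have hphase := strictAntiOn_phase hp ha hη₂.le (husmooth.of_le (by norm_num)) hval hfpos
    (fun θ hθ => hupde _ (ptOf_mem_wedge one_pos hθ))
  have hwidth := sub_lt_two_mul_of_strictAntiOn_of_abs_sub_lt (by linarith) hphase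
    fun θ _ => by simpa using abs_angleShift_lt (sqrt_pos.2 hA) ha₂ _
  have hinv : a⁻¹ = 1 / 2 * √(2 * (p - 1) / p) := by
    rw [← sqrt_inv, show (2 * p / (p - 1))⁻¹ = (1 / 2) ^ 2 * (2 * (p - 1) / p) by
      field_simp, sqrt_mul (by norm_num), sqrt_sq (by norm_num)]
  rw [← hinv]
  linarith

theorem necessity_of_angle_condition
    (p η : ℝ) (hp : 1 < p) (hη : η ∈ Set.Ioo 0 (2*Real.pi))
    (u : EuclideanSpace ℝ (Fin 2) → ℝ) (f : ℝ → ℝ)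
    (hucont : ContinuousOn u (closure (wedge η)))
    (husmooth : ContDiffOn ℝ 3 u (wedge η))
    (huf : ∀ r θ : ℝ, 0 < r → θ ∈ Set.Icc (-η/2) (η/2) → u (ptOf r θ) = r^2 * f θ)
    (hub : ∀ x ∈ frontier (wedge η), u x = 0)
    (hupos : ∀ x ∈ wedge η, 0 < u x)
    (hugrad : ∀ x ∈ wedge η, gradient u x ≠ 0)
    (hupde : ∀ x ∈ wedge η, gameLap p u x = -1) :
    η < Real.pi * (1 - (1/2) * Real.sqrt (2*(p-1)/p)) :=
  necessity_of_angle_condition_general p η hp hη u f husmooth huf hupos hupde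
end

section
/- For every real p > 1, the improper integral identity 2·∫₀^∞ (4 + (p−1)·z²) / (2(p−1)·z⁴ + 4(3p−2)·z² + 16p) dz = (π/2)·(1 − (1/2)·√(2(p−1)/p)) holds. -/
open Set Real MeasureTheory

/-! With `a = 2 / √(2(p-1)/p)`, i.e. `(p - 1) a² = 2p`, the denominator factors as
`2 (p - 1) (z² + 4) (z² + a²)`, so the integrand is `1/(z² + 2²) - ½ · 1/(z² + a²)`.
Since `∫₀^∞ dz/(b² + z²) = π/(2b)` (arctan), the integral is `π/4 - π/(4a)`. -/

theorem inv_sq_add_sq_eq {b : ℝ} (hb : b ≠ 0) (x : ℝ) :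
    (b ^ 2 + x ^ 2)⁻¹ = (b ^ 2)⁻¹ * (1 + (b⁻¹ * x) ^ 2)⁻¹ := by
  field_simp

theorem integrable_inv_sq_add_sq {b : ℝ} (hb : b ≠ 0) :
    Integrable fun x : ℝ => (b ^ 2 + x ^ 2)⁻¹ := by
  simp_rw [inv_sq_add_sq_eq hb]
  exact (integrable_inv_one_add_sq.comp_mul_left' (inv_ne_zero hb)).const_mul _

theorem integral_Ioi_inv_sq_add_sq {b : ℝ} (hb : 0 < b) :
    ∫ x in Ioi (0 : ℝ), (b ^ 2 + x ^ 2)⁻¹ = π / (2 * b) := by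
  simp_rw [inv_sq_add_sq_eq hb.ne']
  rw [integral_const_mul, integral_comp_mul_left_Ioi (fun x => (1 + x ^ 2)⁻¹) 0 (inv_pos.mpr hb),
    mul_zero, integral_Ioi_inv_one_add_sq, arctan_zero, inv_inv, smul_eq_mul]
  field_simp
  ring

theorem div_quartic_eq_partial_fractions {p a : ℝ} (hp : 1 < p) (ha : (p - 1) * a ^ 2 = 2 * p)
    (z : ℝ) :
    (4 + (p - 1) * z ^ 2) / (2 * (p - 1) * z ^ 4 + 4 * (3 * p - 2) * z ^ 2 + 16 * p)
      = (2 ^ 2 + z ^ 2)⁻¹ - (1 / 2) * (a ^ 2 + z ^ 2)⁻¹ := by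
  have hp1 : 0 < p - 1 := by linarith
  have ha2 : 0 < a ^ 2 := pos_of_mul_pos_right (by linarith : 0 < (p - 1) * a ^ 2) hp1.le
  have hfactor : 2 * (p - 1) * z ^ 4 + 4 * (3 * p - 2) * z ^ 2 + 16 * p
      = 2 * (p - 1) * (2 ^ 2 + z ^ 2) * (a ^ 2 + z ^ 2) := by
    linear_combination (-2 * z ^ 2 - 8) * ha
  have hz : 0 < a ^ 2 + z ^ 2 := add_pos_of_pos_of_nonneg ha2 (sq_nonneg z)
  rw [hfactor]
  field_simp
  linear_combination -2 * ha

theorem residue_integral_identity (p : ℝ) (hp : 1 < p) :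
    2 * ∫ z in Set.Ioi (0:ℝ),
        (4 + (p - 1)*z^2) / (2*(p - 1)*z^4 + 4*(3*p - 2)*z^2 + 16*p)
      = (Real.pi/2) * (1 - (1/2) * Real.sqrt (2*(p - 1)/p)) := by
  have hp0 : 0 < p := by linarith
  have hp1 : 0 < p - 1 := by linarith
  set s := √(2 * (p - 1) / p)
  have hs : 0 < s := sqrt_pos.mpr (by positivity)
  have ha : (p - 1) * (2 / s) ^ 2 = 2 * p := by
    rw [div_pow, sq_sqrt (by positivity)]
    field_simp
  simp_rw [div_quartic_eq_partial_fractions hp ha]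
  rw [integral_sub (integrable_inv_sq_add_sq two_ne_zero).integrableOn
      ((integrable_inv_sq_add_sq (by positivity)).integrableOn.const_mul _),
    integral_const_mul, integral_Ioi_inv_sq_add_sq two_pos,
    integral_Ioi_inv_sq_add_sq (by positivity)]
  field_simp
end
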